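/- Let C be a ℤ_p-chain complex with fundamental-domain bases as in the context. Give Hom(C^d, ℤ) the coboundary dual to the restricted boundary of C^d. Then {sσ : σ ∈ F_n} is a basis of C^d_n and {sσ* : σ ∈ F_n} is a basis of C^n_d (where σ* denotes the dual-basis cochain of σ with respect to the basis {t^kσ}), and the homomorphism γ : C*_d → Hom(C^d, ℤ) determined by γ(sσ*) = (sσ)* (the dual-basis functional of sσ with respect to the basis {sσ : σ ∈ F_n}) is an isomorphism of cochain complexes. Moreover, for every cochain φ ∈ C^n vanishing on t^kσ for all σ ∈ F_n and all 1 ≤ k ≤ p−1, and every chain c ∈ C_n, one has γ(sφ)(sc) = φ(sc). -/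

import Mathlib

/-- A `ℤ_p`-chain complex (in nonnegative degrees) whose degree-`n` chain group is the
finitely generated free ℤ-module with basis `{t^k σ : σ ∈ F n, 0 ≤ k ≤ p−1}`, i.e. the
free ℤ-module on `F n × ZMod p`; the action of `t` cyclically permutes the basis, and
commutes with the boundary. Equivalently, each chain group is a finitely generated free
`ℤ[ℤ/pℤ]`-module with the generator of `ℤ/pℤ` acting as `t`. -/
structure ZpFreeComplex (p : ℕ) where
  F : ℕ → Type
  fin : ∀ n, Fintype (F n)
  bd : ∀ n, ((F (n + 1) × ZMod p → ℤ) →+ (F n × ZMod p → ℤ))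
  bd_bd : ∀ n x, bd n (bd (n + 1) x) = 0
  bd_t : ∀ n (c : F (n + 1) × ZMod p → ℤ),
    bd n (fun z => c (z.1, z.2 - 1)) = fun z => bd n c (z.1, z.2 - 1)

namespace ZpFreeComplex

variable {p : ℕ} (X : ZpFreeComplex p)

/-- degree-`n` chains -/
abbrev Ch (n : ℕ) := X.F n × ZMod p → ℤ

/-- degree-`n` integral cochains -/
abbrev Co (n : ℕ) := (X.F n × ZMod p → ℤ) →+ ℤ

/-- the chain map `t^k` -/
def tCh (n k : ℕ) : X.Ch n →+ X.Ch n where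
  toFun c := fun z => c (z.1, z.2 - (k : ZMod p))
  map_zero' := rfl
  map_add' _ _ := rfl

/-- `s = 1 + t + ⋯ + t^{p−1}` on chains -/
def sCh (n : ℕ) : X.Ch n →+ X.Ch n := ∑ k ∈ Finset.range p, X.tCh n k

/-- `d = 1 − t` on chains -/
def dCh (n : ℕ) : X.Ch n →+ X.Ch n := AddMonoidHom.id _ - X.tCh n 1

/-- the cochain map `t^k`, `φ ↦ φ ∘ t^k` -/
def tCo (n k : ℕ) : X.Co n →+ X.Co n where
  toFun φ := φ.comp (X.tCh n k)
  map_zero' := by ext x; simp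
  map_add' _ _ := by ext x; simp

/-- `s = 1 + t + ⋯ + t^{p−1}` on cochains -/
def sCo (n : ℕ) : X.Co n →+ X.Co n where
  toFun φ := φ.comp (X.sCh n)
  map_zero' := by ext x; simp
  map_add' _ _ := by ext x; simp

/-- `d = 1 − t` on cochains -/
def dCo (n : ℕ) : X.Co n →+ X.Co n where
  toFun φ := φ.comp (X.dCh n)
  map_zero' := by ext x; simp
  map_add' _ _ := by ext x; simp

/-- the coboundary `δφ = φ ∘ ∂` -/
def cb (n : ℕ) : X.Co n →+ X.Co (n + 1) where
  toFun φ := φ.comp (X.bd n)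
  map_zero' := by ext x; simp
  map_add' _ _ := by ext x; simp

/-- the boundary out of degree `n` (the zero map in degree 0). -/
def bdFrom : ∀ n : ℕ, (X.Ch n →+ X.Ch (n - 1))
  | 0 => 0
  | (j + 1) => X.bd j

lemma tCh_one (n : ℕ) (c : X.Ch n) : X.tCh n 1 c = fun z => c (z.1, z.2 - 1) := by
  funext z
  simp [tCh]

lemma tCh_succ (n k : ℕ) (c : X.Ch n) :
    X.tCh n (k + 1) c = X.tCh n 1 (X.tCh n k c) := by
  funext z
  show c (z.1, z.2 - ((k + 1 : ℕ) : ZMod p)) = c (z.1, z.2 - ((1 : ℕ) : ZMod p) - ((k : ℕ) : ZMod p))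
  have h2 : z.2 - ((k + 1 : ℕ) : ZMod p) = z.2 - ((1 : ℕ) : ZMod p) - ((k : ℕ) : ZMod p) := by
    push_cast
    ring
  rw [h2]

lemma tCh_zero (n : ℕ) (c : X.Ch n) : X.tCh n 0 c = c := by
  funext z
  simp [tCh]

lemma bd_tCh (n k : ℕ) (c : X.Ch (n + 1)) :
    X.bd n (X.tCh (n + 1) k c) = X.tCh n k (X.bd n c) := by
  induction k with
  | zero => rw [tCh_zero, tCh_zero]
  | succ k ih =>
      rw [X.tCh_succ (n + 1) k c, X.tCh_succ n k (X.bd n c)]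
      rw [X.tCh_one (n + 1) (X.tCh (n + 1) k c)]
      rw [X.bd_t n (X.tCh (n + 1) k c)]
      rw [ih]
      rw [← X.tCh_one n (X.tCh n k (X.bd n c))]

lemma bd_sCh (n : ℕ) (c : X.Ch (n + 1)) :
    X.bd n (X.sCh (n + 1) c) = X.sCh n (X.bd n c) := by
  simp only [sCh, AddMonoidHom.finset_sum_apply, map_sum, bd_tCh]

lemma bd_dCh (n : ℕ) (c : X.Ch (n + 1)) :
    X.bd n (X.dCh (n + 1) c) = X.dCh n (X.bd n c) := by
  simp only [dCh, AddMonoidHom.sub_apply, AddMonoidHom.id_apply, map_sub, bd_tCh]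

end ZpFreeComplex

namespace ZpFreeComplex

variable {p : ℕ} (X : ZpFreeComplex p)

/-- cocycles of the `d`-cochain complex `C*_d = ker d ⊆ C*` -/
def dcocycles (n : ℕ) : AddSubgroup (X.Co n) := (X.dCo n).ker ⊓ (X.cb n).ker

/-- coboundaries of the `d`-cochain complex -/
def dcobds : ∀ n : ℕ, AddSubgroup (X.Co n)
  | 0 => ⊥
  | (j + 1) => AddSubgroup.map (X.cb j) ((X.dCo j).ker)

/-- the `d`-cohomology `H^n_d` -/
abbrev Hd (n : ℕ) := X.dcocycles n ⧸ (X.dcobds n).addSubgroupOf (X.dcocycles n)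

/-- the `d`-cohomology class `[φ]_d` of a cocycle of `C*_d` -/
def clsd (n : ℕ) (φ : X.Co n) (h : φ ∈ X.dcocycles n) : X.Hd n :=
  QuotientAddGroup.mk ⟨φ, h⟩

/-- cocycles of the `s`-cochain complex `C*_s = ker s ⊆ C*` -/
def scocycles (n : ℕ) : AddSubgroup (X.Co n) := (X.sCo n).ker ⊓ (X.cb n).ker

/-- coboundaries of the `s`-cochain complex -/
def scobds : ∀ n : ℕ, AddSubgroup (X.Co n)
  | 0 => ⊥
  | (j + 1) => AddSubgroup.map (X.cb j) ((X.sCo j).ker)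

/-- the `s`-cohomology `H^n_s` -/
abbrev Hs (n : ℕ) := X.scocycles n ⧸ (X.scobds n).addSubgroupOf (X.scocycles n)

/-- the `s`-cohomology class `[φ]_s` of a cocycle of `C*_s` -/
def clss (n : ℕ) (φ : X.Co n) (h : φ ∈ X.scocycles n) : X.Hs n :=
  QuotientAddGroup.mk ⟨φ, h⟩

/-- the boundary of the `d`-chain complex `C^d = ker d ⊆ C`, i.e. the restriction
of the boundary of `C`. -/
def bdD (n : ℕ) : ↥((X.dCh (n + 1)).ker) →+ ↥((X.dCh n).ker) :=
  AddMonoidHom.codRestrict ((X.bd n).comp (X.dCh (n + 1)).ker.subtype) ((X.dCh n).ker)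
    (fun x => by
      have hx : X.dCh (n + 1) (x : X.Ch (n + 1)) = 0 := x.2
      simp only [AddMonoidHom.mem_ker, AddMonoidHom.coe_comp, AddSubgroup.coe_subtype,
        Function.comp_apply]
      rw [← bd_dCh, hx, map_zero])

/-- the boundary of the `s`-chain complex `C^s = ker s ⊆ C`, i.e. the restriction
of the boundary of `C`. -/
def bdS (n : ℕ) : ↥((X.sCh (n + 1)).ker) →+ ↥((X.sCh n).ker) :=
  AddMonoidHom.codRestrict ((X.bd n).comp (X.sCh (n + 1)).ker.subtype) ((X.sCh n).ker)
    (fun x => by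
      have hx : X.sCh (n + 1) (x : X.Ch (n + 1)) = 0 := x.2
      simp only [AddMonoidHom.mem_ker, AddMonoidHom.coe_comp, AddSubgroup.coe_subtype,
        Function.comp_apply]
      rw [← bd_sCh, hx, map_zero])

lemma cb_dCo (n : ℕ) (φ : X.Co n) :
    X.cb n (X.dCo n φ) = X.dCo (n + 1) (X.cb n φ) := by
  ext x
  show (X.dCo n φ) (X.bd n x) = (X.cb n φ) (X.dCh (n + 1) x)
  show φ (X.dCh n (X.bd n x)) = φ (X.bd n (X.dCh (n + 1) x))
  rw [bd_dCh]

lemma cb_sCo (n : ℕ) (φ : X.Co n) :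
    X.cb n (X.sCo n φ) = X.sCo (n + 1) (X.cb n φ) := by
  ext x
  show φ (X.sCh n (X.bd n x)) = φ (X.bd n (X.sCh (n + 1) x))
  rw [bd_sCh]

/-- the coboundary of `C*_d`, i.e. the restriction of the coboundary of `C*`. -/
def cbD (n : ℕ) : ↥((X.dCo n).ker) →+ ↥((X.dCo (n + 1)).ker) :=
  AddMonoidHom.codRestrict ((X.cb n).comp (X.dCo n).ker.subtype) ((X.dCo (n + 1)).ker)
    (fun φ => by
      have hφ : X.dCo n (φ : X.Co n) = 0 := φ.2
      simp only [AddMonoidHom.mem_ker, AddMonoidHom.coe_comp, AddSubgroup.coe_subtype,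
        Function.comp_apply]
      rw [← cb_dCo, hφ, map_zero])

end ZpFreeComplex

open ZpFreeComplex

/-!
An element of `ker d`, chain or cochain, is constant along each `t`-orbit of basis elements, so
both `C^d_n` and `C^n_d` are free on the fundamental domain, with bases `{sσ}` and `{sσ*}`.
Pairing `sσ*` with an orbit-constant chain counts each orbit `p` times, so the dual-basis
isomorphism `γ` satisfies `p · γ(α)(x) = α(x)`. Since `ℤ` is torsion-free, this identity
alone gives compatibility with the (co)boundaries and, with `s² = p s`, the formula
`γ(sφ)(sc) = φ(sc)`.
-/

theorem ZMod.sum_range_natCast {p : ℕ} [NeZero p] {M : Type*} [AddCommMonoid M]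
    (f : ZMod p → M) : ∑ k ∈ Finset.range p, f k = ∑ j : ZMod p, f j := by
  refine Finset.sum_nbij' (fun k => (k : ZMod p)) ZMod.val ?_ ?_ ?_ ?_ ?_ <;>
    simp [ZMod.val_lt, ZMod.val_natCast]
  exact fun k hk => Nat.mod_eq_of_lt hk

theorem Function.Periodic.zmod_apply_eq_apply_zero {p : ℕ} [NeZero p] {M : Type*}
    {f : ZMod p → M} (hf : Function.Periodic f 1) (j : ZMod p) : f j = f 0 := by
  simpa using hf.nat_mul j.val 0

namespace ZpFreeComplex

variable {p : ℕ} (X : ZpFreeComplex p)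

instance instFintypeF (n : ℕ) : Fintype (X.F n) := X.fin n

variable {n : ℕ}

theorem dCh_apply (c : X.Ch n) (z : X.F n × ZMod p) :
    X.dCh n c z = c z - c (z.1, z.2 - 1) := by
  simp [dCh, tCh]

@[simp]
theorem dCo_apply (φ : X.Co n) (c : X.Ch n) : X.dCo n φ c = φ (X.dCh n c) := rfl

@[simp]
theorem sCo_apply (φ : X.Co n) (c : X.Ch n) : X.sCo n φ c = φ (X.sCh n c) := rfl

section

variable [NeZero p]

theorem sCh_apply (c : X.Ch n) (z : X.F n × ZMod p) :
    X.sCh n c z = ∑ j : ZMod p, c (z.1, j) := by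
  simp only [sCh, tCh, AddMonoidHom.finsetSum_apply, AddMonoidHom.coe_mk, ZeroHom.coe_mk,
    Finset.sum_apply]
  rw [ZMod.sum_range_natCast (fun k => c (z.1, z.2 - k))]
  exact Equiv.sum_comp (Equiv.subLeft z.2) (fun j => c (z.1, j))

theorem sCh_dCh (c : X.Ch n) : X.sCh n (X.dCh n c) = 0 := by
  funext z
  simp only [sCh_apply, dCh_apply, Finset.sum_sub_distrib, Pi.zero_apply, sub_eq_zero]
  exact (Equiv.sum_comp (Equiv.subRight 1) (fun j => c (z.1, j))).symm

theorem sCh_sCh (c : X.Ch n) : X.sCh n (X.sCh n c) = (p : ℤ) • X.sCh n c := by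
  funext z
  simp [sCh_apply]

theorem sCo_mem_ker_dCo (φ : X.Co n) : X.sCo n φ ∈ (X.dCo n).ker := by
  ext c
  simp [sCh_dCh]

theorem apply_eq_apply_zero_of_mem_ker_dCh {c : X.Ch n} (hc : c ∈ (X.dCh n).ker)
    (z : X.F n × ZMod p) : c z = c (z.1, 0) := by
  have hperiodic : Function.Periodic (fun j => c (z.1, j)) 1 := fun j => by
    simpa [dCh_apply, sub_eq_zero] using congrFun hc (z.1, j + 1)
  exact hperiodic.zmod_apply_eq_apply_zero z.2

def chainEquivFun : (X.dCh n).ker ≃ₗ[ℤ] (X.F n → ℤ) where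
  toFun c σ := (c : X.Ch n) (σ, 0)
  map_add' _ _ := rfl
  map_smul' _ _ := rfl
  invFun a := ⟨fun z => a z.1, by ext z; simp [dCh_apply]⟩
  left_inv c := Subtype.ext <| funext fun z =>
    (X.apply_eq_apply_zero_of_mem_ker_dCh c.2 z).symm
  right_inv _ := rfl

variable (n) in
noncomputable def chainBasis : Module.Basis (X.F n) ℤ (X.dCh n).ker :=
  .ofEquivFun X.chainEquivFun

theorem chainBasis_repr (c : (X.dCh n).ker) (σ : X.F n) :
    (X.chainBasis n).repr c σ = (c : X.Ch n) (σ, 0) := rfl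

end

variable [∀ n, DecidableEq (X.F n)]

theorem dCh_single (z : X.F n × ZMod p) :
    X.dCh n (Pi.single z 1) = Pi.single z 1 - Pi.single (z.1, z.2 + 1) 1 := by
  funext w
  simp [dCh_apply, Pi.single_apply, Prod.ext_iff, sub_eq_iff_eq_add]

/-- The cochain `∑ σ, a σ • σ*`, where `σ*` is evaluation at `(σ, 0)`. -/
def fundamentalCochain (a : X.F n → ℤ) : X.Co n where
  toFun c := ∑ σ, a σ * c (σ, 0)
  map_zero' := by simp
  map_add' c c' := by simp [mul_add, Finset.sum_add_distrib]

theorem fundamentalCochain_single (σ : X.F n) :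
    X.fundamentalCochain (Pi.single σ 1) =
      Pi.evalAddMonoidHom (fun _ : X.F n × ZMod p => ℤ) (σ, 0) := by
  ext c
  simp [fundamentalCochain, Pi.single_apply]

variable [NeZero p]

theorem apply_single_eq_of_mem_ker_dCo {φ : X.Co n} (hφ : φ ∈ (X.dCo n).ker)
    (z : X.F n × ZMod p) : φ (Pi.single z 1) = φ (Pi.single (z.1, 0) 1) := by
  have hperiodic : Function.Periodic (fun j => φ (Pi.single (z.1, j) 1)) 1 := fun j => by
    have := DFunLike.congr_fun hφ (Pi.single (z.1, j) 1)
    rw [AddMonoidHom.zero_apply, dCo_apply, dCh_single, map_sub] at this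
    exact (sub_eq_zero.mp this).symm
  exact hperiodic.zmod_apply_eq_apply_zero z.2

theorem sCh_single_apply (z w : X.F n × ZMod p) :
    X.sCh n (Pi.single z 1) w = if w.1 = z.1 then 1 else 0 := by
  by_cases h : w.1 = z.1 <;> simp [sCh_apply, Pi.single_apply, Prod.ext_iff, h]

theorem sCo_fundamentalCochain_single (a : X.F n → ℤ) (z : X.F n × ZMod p) :
    X.sCo n (X.fundamentalCochain a) (Pi.single z 1) = a z.1 := by
  simp [fundamentalCochain, sCh_single_apply]

def cochainEquivFun : (X.dCo n).ker ≃ₗ[ℤ] (X.F n → ℤ) where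
  toFun φ σ := (φ : X.Co n) (Pi.single (σ, 0) 1)
  map_add' _ _ := rfl
  map_smul' _ _ := rfl
  invFun a := ⟨X.sCo n (X.fundamentalCochain a), X.sCo_mem_ker_dCo _⟩
  left_inv φ := Subtype.ext <| by
    ext z
    exact (X.sCo_fundamentalCochain_single _ z).trans
      (X.apply_single_eq_of_mem_ker_dCo φ.2 z).symm
  right_inv a := funext fun σ => X.sCo_fundamentalCochain_single a (σ, 0)

variable (n) in
noncomputable def cochainBasis : Module.Basis (X.F n) ℤ (X.dCo n).ker :=
  .ofEquivFun X.cochainEquivFun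

theorem coe_chainBasis (σ : X.F n) :
    (X.chainBasis n σ : X.Ch n) = X.sCh n (Pi.single (σ, 0) 1) := by
  funext z
  simp [chainBasis, chainEquivFun, sCh_single_apply, Pi.single_apply]

theorem coe_cochainBasis (σ : X.F n) :
    (X.cochainBasis n σ : X.Co n) =
      X.sCo n (Pi.evalAddMonoidHom (fun _ : X.F n × ZMod p => ℤ) (σ, 0)) := by
  simp [cochainBasis, cochainEquivFun, fundamentalCochain_single]

theorem cochainBasis_apply (σ : X.F n) (c : (X.dCh n).ker) :
    (X.cochainBasis n σ : X.Co n) c = p * (c : X.Ch n) (σ, 0) := by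
  simp [coe_cochainBasis, sCh_apply, X.apply_eq_apply_zero_of_mem_ker_dCh c.2 (σ, _)]

variable (n) in
noncomputable def gamma : (X.dCo n).ker ≃+ ((X.dCh n).ker →+ ℤ) :=
  ((X.cochainBasis n).equiv (X.chainBasis n).dualBasis (Equiv.refl _)).toAddEquiv.trans
    (addMonoidHomLequivInt ℤ).symm.toAddEquiv

theorem gamma_cochainBasis (σ : X.F n) :
    X.gamma n (X.cochainBasis n σ) = ((X.chainBasis n).coord σ).toAddMonoidHom := by
  simp [gamma, Module.Basis.equiv_apply]

theorem natCast_mul_gamma_apply (α : (X.dCo n).ker) (c : (X.dCh n).ker) :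
    p * X.gamma n α c = (α : X.Co n) c := by
  have hbasis (σ : X.F n) :
      p * X.gamma n (X.cochainBasis n σ) c = (X.cochainBasis n σ : X.Co n) c := by
    simp [gamma_cochainBasis, cochainBasis_apply, chainBasis_repr]
  rw [← (X.cochainBasis n).sum_repr α]
  simp only [map_sum, map_zsmul, AddMonoidHom.finsetSum_apply, AddMonoidHom.coe_smul,
    Pi.smul_apply, smul_eq_mul, Finset.mul_sum, AddSubgroup.val_finsetSum,
    AddSubgroup.coe_zsmul, mul_left_comm _ ((X.cochainBasis n).repr α _), hbasis]

theorem gamma_cbD (α : (X.dCo n).ker) :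
    X.gamma (n + 1) (X.cbD n α) = (X.gamma n α).comp (X.bdD n) := by
  ext c
  apply mul_left_cancel₀ (Nat.cast_ne_zero.mpr (NeZero.ne p) : (p : ℤ) ≠ 0)
  rw [natCast_mul_gamma_apply, AddMonoidHom.comp_apply, natCast_mul_gamma_apply]
  rfl

theorem gamma_sCo_sCh (φ : X.Co n) (c : X.Ch n) (hφ : X.sCo n φ ∈ (X.dCo n).ker)
    (hc : X.sCh n c ∈ (X.dCh n).ker) :
    X.gamma n ⟨X.sCo n φ, hφ⟩ ⟨X.sCh n c, hc⟩ = φ (X.sCh n c) := by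
  apply mul_left_cancel₀ (Nat.cast_ne_zero.mpr (NeZero.ne p) : (p : ℤ) ≠ 0)
  rw [natCast_mul_gamma_apply, sCo_apply, sCh_sCh, map_zsmul, smul_eq_mul]

end ZpFreeComplex

/-- **The isomorphism `γ : C*_d ≅ Hom(C^d, ℤ)`.**
Let `K` be a `ℤ_p`-chain complex with fundamental-domain bases (degree-`n` chain group
free on `{t^k σ : σ ∈ F_n, 0 ≤ k ≤ p−1}`, modelled as `F n × ZMod p → ℤ`, with `t`
cyclically shifting the second coordinate and `σ* = `evaluation at `(σ,0)` the dual-basis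
cochain).  Give `Hom(C^d, ℤ)` the coboundary dual to the restricted boundary of
`C^d = ker d`.  Then `{sσ : σ ∈ F_n}` is a basis of `C^d_n`, `{sσ* : σ ∈ F_n}` is a
basis of `C^n_d = ker d ⊆ C^n`, and the homomorphism `γ` determined by
`γ(sσ*) = (sσ)*` is an isomorphism of cochain complexes.  Moreover for every cochain
`φ ∈ C^n` vanishing on `t^k σ` for all `σ ∈ F_n`, `1 ≤ k ≤ p−1`, and every chain
`c ∈ C_n`, one has `γ(sφ)(sc) = φ(sc)`. -/
theorem gamma_isomorphism_of_d_cochains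
    (p : ℕ) (hp : p.Prime) (X : ZpFreeComplex p) [∀ n, DecidableEq (X.F n)] :
    ∃ (b : ∀ n, Module.Basis (X.F n) ℤ ↥((X.dCh n).ker))
      (b' : ∀ n, Module.Basis (X.F n) ℤ ↥((X.dCo n).ker))
      (γ : ∀ n, ↥((X.dCo n).ker) ≃+ (↥((X.dCh n).ker) →+ ℤ)),
      (∀ n (σ : X.F n), ((b n σ : X.Ch n)) = X.sCh n (Pi.single (σ, (0 : ZMod p)) (1 : ℤ)))
      ∧ (∀ n (σ : X.F n), ((b' n σ : X.Co n)) =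
          X.sCo n (Pi.evalAddMonoidHom (fun _ : X.F n × ZMod p => ℤ) (σ, (0 : ZMod p))))
      ∧ (∀ n (σ : X.F n), γ n (b' n σ) = ((b n).coord σ).toAddMonoidHom)
      ∧ (∀ n (α : ↥((X.dCo n).ker)),
          γ (n + 1) (X.cbD n α) = (γ n α).comp (X.bdD n))
      ∧ (∀ n (φ : X.Co n),
          (∀ (σ : X.F n) (k : ZMod p), k ≠ 0 → φ (Pi.single (σ, k) (1 : ℤ)) = 0) →
          ∀ (c : X.Ch n) (hφ : X.sCo n φ ∈ (X.dCo n).ker) (hc : X.sCh n c ∈ (X.dCh n).ker),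
            γ n ⟨X.sCo n φ, hφ⟩ ⟨X.sCh n c, hc⟩ = φ (X.sCh n c)) := by
  have : NeZero p := ⟨hp.ne_zero⟩
  exact ⟨fun n => X.chainBasis n, fun n => X.cochainBasis n, fun n => X.gamma n,
    fun _ => X.coe_chainBasis,
    fun _ => X.coe_cochainBasis, fun _ => X.gamma_cochainBasis, fun _ => X.gamma_cbD,
    fun _ φ _ c => X.gamma_sCo_sCh φ c⟩
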